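/- For all positive integers a, b, c it holds that f(a,b,c) ≥ ⌊(a+b+c)/2⌋ − 1. -/

import Mathlib

/-!
Fix a feasible strategy `Q`; for the `i`-th coordinate, of size `nᵢ`, let `Eᵢ` be the set of values
no question of `Q` takes and `Uᵢ` the set of questions that take their value alone. Every value
taken is taken by one question of `Uᵢ` or by at least two questions, so
`2 nᵢ ≤ #Q + #Uᵢ + 2 #Eᵢ`. Secrets agreeing in the third coordinate must be separated by the
coordinates `i`, `j` alone, and exchanging the `j`-entries of two secrets shows
`#Eᵢ + #Eⱼ + #(Uᵢ ∩ Uⱼ) ≤ 2`. Summing, with inclusion–exclusion `∑ #Uᵢ ≤ #Q + ∑ #(Uᵢ ∩ Uⱼ)`,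
gives `2 (a + b + c) ≤ 4 #Q + 6`.
-/

/-- A question (and a secret) for `(a,b,c)`-Mastermind is a triple in
`Fin a × Fin b × Fin c`. -/
abbrev Question (a b c : ℕ) := Fin a × Fin b × Fin c

/-- `g s q` is the number of coordinates in which `s` and `q` agree. -/
def g {a b c : ℕ} (s q : Question a b c) : ℕ :=
  (if s.1 = q.1 then 1 else 0) + (if s.2.1 = q.2.1 then 1 else 0) +
    (if s.2.2 = q.2.2 then 1 else 0)

/-- A finite set of questions is a feasible strategy if every pair of distinct
secrets is distinguished by some question. -/
def Feasible {a b c : ℕ} (Q : Finset (Question a b c)) : Prop :=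
  ∀ s s' : Question a b c, s ≠ s' → ∃ q ∈ Q, g s q ≠ g s' q

/-- `f a b c` is the minimum cardinality of a feasible strategy for
`(a,b,c)`-Mastermind. -/
noncomputable def f (a b c : ℕ) : ℕ :=
  sInf {n : ℕ | ∃ Q : Finset (Question a b c), Feasible Q ∧ Q.card = n}

open Finset

section UniqueValued

variable {ι κ : Type*} [DecidableEq ι] [DecidableEq κ]

def uniqueValued (Q : Finset ι) (φ : ι → κ) : Finset ι :=
  Q.filter fun q => ∀ r ∈ Q, φ r = φ q → r = q

variable {Q : Finset ι} {φ : ι → κ}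

theorem mem_uniqueValued {q : ι} :
    q ∈ uniqueValued Q φ ↔ q ∈ Q ∧ ∀ r ∈ Q, φ r = φ q → r = q :=
  mem_filter

theorem uniqueValued_subset : uniqueValued Q φ ⊆ Q :=
  filter_subset _ _

theorem apply_ne_of_mem_uniqueValued {q r : ι} (hq : q ∈ uniqueValued Q φ) (hr : r ∈ Q)
    (hne : r ≠ q) : φ r ≠ φ q :=
  fun h => hne ((mem_uniqueValued.1 hq).2 r hr h)

theorem two_mul_card_image_le_card_add_card_uniqueValued (Q : Finset ι) (φ : ι → κ) :
    2 * #(Q.image φ) ≤ #Q + #(uniqueValued Q φ) := by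
  have hU : #(uniqueValued Q φ) = ∑ x ∈ Q.image φ, #{q ∈ uniqueValued Q φ | φ q = x} :=
    card_eq_sum_card_fiberwise fun q hq => mem_image_of_mem φ (uniqueValued_subset hq)
  have hfiber : ∀ x ∈ Q.image φ, 2 ≤ #{q ∈ Q | φ q = x} + #{q ∈ uniqueValued Q φ | φ q = x} := by
    intro x hx
    obtain ⟨q, hq, rfl⟩ := mem_image.1 hx
    have hQq : 1 ≤ #{r ∈ Q | φ r = φ q} := card_pos.2 ⟨q, mem_filter.2 ⟨hq, rfl⟩⟩
    by_cases h2 : 2 ≤ #{r ∈ Q | φ r = φ q}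
    · omega
    have hle : #{r ∈ Q | φ r = φ q} ≤ 1 := by omega
    have hUq : q ∈ uniqueValued Q φ := mem_uniqueValued.2 ⟨hq, fun r hr hφ =>
      card_le_one.1 hle r (mem_filter.2 ⟨hr, hφ⟩) q (mem_filter.2 ⟨hq, rfl⟩)⟩
    have : 1 ≤ #{r ∈ uniqueValued Q φ | φ r = φ q} := card_pos.2 ⟨q, mem_filter.2 ⟨hUq, rfl⟩⟩
    omega
  calc 2 * #(Q.image φ) = ∑ _x ∈ Q.image φ, 2 := by rw [sum_const, smul_eq_mul, mul_comm]
    _ ≤ ∑ x ∈ Q.image φ, (#{q ∈ Q | φ q = x} + #{q ∈ uniqueValued Q φ | φ q = x}) :=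
      sum_le_sum hfiber
    _ = #Q + #(uniqueValued Q φ) := by rw [sum_add_distrib, ← card_eq_sum_card_image, ← hU]

theorem two_mul_card_le_card_add_card_uniqueValued_add [Fintype κ] (Q : Finset ι) (φ : ι → κ) :
    2 * Fintype.card κ ≤ #Q + #(uniqueValued Q φ) + 2 * #(Q.image φ)ᶜ := by
  have := two_mul_card_image_le_card_add_card_uniqueValued Q φ
  have := card_add_card_compl (Q.image φ)
  omega

end UniqueValued

theorem Finset.card_add_card_add_card_le {α : Type*} [DecidableEq α] (A B C : Finset α) :
    #A + #B + #C ≤ #(A ∪ B ∪ C) + #(A ∩ B) + #(A ∩ C) + #(B ∩ C) := by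
  have hAB := card_union_add_card_inter A B
  have hABC := card_union_add_card_inter (A ∪ B) C
  have hinter : #((A ∪ B) ∩ C) ≤ #(A ∩ C) + #(B ∩ C) := by
    rw [union_inter_distrib_right]
    exact card_union_le _ _
  omega

section PairSeparating

variable {ι α β : Type*} [DecidableEq α] [DecidableEq β]

/-- Two secrets that agree in a third coordinate get the same answers there, so a feasible
strategy must tell them apart through the matches in the coordinates `p` and `r` alone. -/
def PairSeparating (Q : Finset ι) (p : ι → α) (r : ι → β) : Prop :=
  ∀ x x' : α, ∀ y y' : β, (x, y) ≠ (x', y') → ∃ q ∈ Q,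
    (if x = p q then 1 else 0) + (if y = r q then 1 else 0) ≠
      (if x' = p q then (1 : ℕ) else 0) + (if y' = r q then 1 else 0)

variable {Q : Finset ι} {p : ι → α} {r : ι → β}

theorem PairSeparating.symm (h : PairSeparating Q p r) : PairSeparating Q r p := by
  intro y y' x x' hne
  obtain ⟨q, hq, hdiff⟩ := h x x' y y' fun heq => hne (by simp_all [Prod.ext_iff])
  exact ⟨q, hq, by omega⟩

theorem PairSeparating.card_compl_image_le_one [Fintype α] [Nonempty β]
    (h : PairSeparating Q p r) : #(Q.image p)ᶜ ≤ 1 := by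
  refine card_le_one.2 fun x hx x' hx' => by_contra fun hne => ?_
  obtain ⟨y⟩ := ‹Nonempty β›
  obtain ⟨q, hq, hdiff⟩ := h x x' y y (by simp [hne])
  have hxq : x ≠ p q := fun h => mem_compl.1 hx (h ▸ mem_image_of_mem p hq)
  have hxq' : x' ≠ p q := fun h => mem_compl.1 hx' (h ▸ mem_image_of_mem p hq)
  simp [hxq, hxq'] at hdiff

theorem PairSeparating.card_inter_uniqueValued_le_one [DecidableEq ι]
    (h : PairSeparating Q p r) :
    #(uniqueValued Q p ∩ uniqueValued Q r) ≤ 1 := by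
  refine card_le_one.2 fun q hq q' hq' => by_contra fun hne => ?_
  obtain ⟨hqp, hqr⟩ := mem_inter.1 hq
  obtain ⟨hqp', hqr'⟩ := mem_inter.1 hq'
  have hp := apply_ne_of_mem_uniqueValued hqp (uniqueValued_subset hqp') (Ne.symm hne)
  have hr := apply_ne_of_mem_uniqueValued hqr (uniqueValued_subset hqr') (Ne.symm hne)
  obtain ⟨s, hs, hdiff⟩ := h (p q) (p q') (r q') (r q) (by simp [Ne.symm hp])
  by_cases hsq : s = q
  · subst hsq; simp [hp, hr] at hdiff
  by_cases hsq' : s = q'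
  · subst hsq'; simp [Ne.symm hp, Ne.symm hr] at hdiff
  have := apply_ne_of_mem_uniqueValued hqp hs hsq
  have := apply_ne_of_mem_uniqueValued hqr hs hsq
  have := apply_ne_of_mem_uniqueValued hqp' hs hsq'
  have := apply_ne_of_mem_uniqueValued hqr' hs hsq'
  simp_all [eq_comm]

theorem PairSeparating.inter_uniqueValued_eq_empty [DecidableEq ι] (h : PairSeparating Q p r)
    {x : α} {y : β} (hx : x ∉ Q.image p) (hy : y ∉ Q.image r) :
    uniqueValued Q p ∩ uniqueValued Q r = ∅ := by
  refine eq_empty_of_forall_notMem fun q hq => ?_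
  obtain ⟨hqp, hqr⟩ := mem_inter.1 hq
  have hxq : ∀ s ∈ Q, x ≠ p s := fun s hs h => hx (h ▸ mem_image_of_mem p hs)
  have hyq : ∀ s ∈ Q, y ≠ r s := fun s hs h => hy (h ▸ mem_image_of_mem r hs)
  obtain ⟨s, hs, hdiff⟩ := h (p q) x y (r q) (by simp [Ne.symm (hxq q (uniqueValued_subset hqp))])
  by_cases hsq : s = q
  · subst hsq; simp [hxq s hs, hyq s hs] at hdiff
  have := apply_ne_of_mem_uniqueValued hqp hs hsq
  have := apply_ne_of_mem_uniqueValued hqr hs hsq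
  simp_all [eq_comm]

theorem PairSeparating.card_compl_image_add_card_compl_image_add_card_inter_le
    [DecidableEq ι] [Fintype α] [Fintype β] [Nonempty α] [Nonempty β] (h : PairSeparating Q p r) :
    #(Q.image p)ᶜ + #(Q.image r)ᶜ + #(uniqueValued Q p ∩ uniqueValued Q r) ≤ 2 := by
  have hp := h.card_compl_image_le_one
  have hr := h.symm.card_compl_image_le_one
  have hpr := h.card_inter_uniqueValued_le_one
  obtain ⟨x, hx⟩ | hp0 := (Q.image p)ᶜ.eq_empty_or_nonempty.symm
  · obtain ⟨y, hy⟩ | hr0 := (Q.image r)ᶜ.eq_empty_or_nonempty.symm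
    · rw [h.inter_uniqueValued_eq_empty (mem_compl.1 hx) (mem_compl.1 hy), card_empty]
      omega
    · rw [hr0, card_empty]; omega
  · rw [hp0, card_empty]; omega

end PairSeparating

section Mastermind

variable {a b c : ℕ}

theorem g_eq_three_iff {s q : Question a b c} : g s q = 3 ↔ s = q := by
  unfold g
  constructor
  · intro h
    split_ifs at h with h1 h2 h3 <;> first | omega | exact Prod.ext h1 (Prod.ext h2 h3)
  · rintro rfl
    simp

theorem feasible_univ : Feasible (univ : Finset (Question a b c)) :=
  fun s _ hne => ⟨s, mem_univ s, fun h => hne (g_eq_three_iff.1 (h ▸ g_eq_three_iff.2 rfl)).symm⟩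

variable {Q : Finset (Question a b c)}

theorem Feasible.pairSeparating_first_second (hc : 0 < c) (hQ : Feasible Q) :
    PairSeparating Q (·.1) (·.2.1) := by
  intro x x' y y' hne
  obtain ⟨q, hq, hdiff⟩ := hQ (x, y, ⟨0, hc⟩) (x', y', ⟨0, hc⟩) (by simpa [Prod.ext_iff] using hne)
  exact ⟨q, hq, fun h => hdiff (by simp only [g] at h ⊢; omega)⟩

theorem Feasible.pairSeparating_first_third (hb : 0 < b) (hQ : Feasible Q) :
    PairSeparating Q (·.1) (·.2.2) := by
  intro x x' z z' hne
  obtain ⟨q, hq, hdiff⟩ := hQ (x, ⟨0, hb⟩, z) (x', ⟨0, hb⟩, z') (by simpa [Prod.ext_iff] using hne)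
  exact ⟨q, hq, fun h => hdiff (by simp only [g] at h ⊢; omega)⟩

theorem Feasible.pairSeparating_second_third (ha : 0 < a) (hQ : Feasible Q) :
    PairSeparating Q (·.2.1) (·.2.2) := by
  intro y y' z z' hne
  obtain ⟨q, hq, hdiff⟩ := hQ (⟨0, ha⟩, y, z) (⟨0, ha⟩, y', z') (by simpa [Prod.ext_iff] using hne)
  exact ⟨q, hq, fun h => hdiff (by simp only [g] at h ⊢; omega)⟩

theorem Feasible.add_add_le_two_mul_card_add_three (ha : 0 < a) (hb : 0 < b) (hc : 0 < c)
    (hQ : Feasible Q) :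
    a + b + c ≤ 2 * #Q + 3 := by
  have : Nonempty (Fin a) := Fin.pos_iff_nonempty.1 ha
  have : Nonempty (Fin b) := Fin.pos_iff_nonempty.1 hb
  have : Nonempty (Fin c) := Fin.pos_iff_nonempty.1 hc
  have h₁ := two_mul_card_le_card_add_card_uniqueValued_add Q (·.1)
  have h₂ := two_mul_card_le_card_add_card_uniqueValued_add Q (·.2.1)
  have h₃ := two_mul_card_le_card_add_card_uniqueValued_add Q (·.2.2)
  simp only [Fintype.card_fin] at h₁ h₂ h₃
  have h₁₂ :=
    (hQ.pairSeparating_first_second hc).card_compl_image_add_card_compl_image_add_card_inter_le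
  have h₁₃ :=
    (hQ.pairSeparating_first_third hb).card_compl_image_add_card_compl_image_add_card_inter_le
  have h₂₃ :=
    (hQ.pairSeparating_second_third ha).card_compl_image_add_card_compl_image_add_card_inter_le
  have hunion : #(uniqueValued Q (·.1) ∪ uniqueValued Q (·.2.1) ∪ uniqueValued Q (·.2.2)) ≤ #Q :=
    card_le_card (union_subset (union_subset uniqueValued_subset uniqueValued_subset)
      uniqueValued_subset)
  have hincl := card_add_card_add_card_le (uniqueValued Q (·.1)) (uniqueValued Q (·.2.1))
    (uniqueValued Q (·.2.2))
  omega

end Mastermind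

theorem f_general_lower_bound (a b c : ℕ) (ha : 0 < a) (hb : 0 < b) (hc : 0 < c) :
    (a + b + c) / 2 - 1 ≤ f a b c := by
  obtain ⟨Q, hQ, hcard⟩ : f a b c ∈ {n | ∃ Q : Finset (Question a b c), Feasible Q ∧ #Q = n} :=
    Nat.sInf_mem ⟨_, univ, feasible_univ, rfl⟩
  have := hQ.add_add_le_two_mul_card_add_three ha hb hc
  omega
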